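/- Let G be a connected graph on vertices v₁,…,vₙ with independence number α(G) ≤ α, where α is a positive integer and G has no isolated vertices. Construct G_α as follows: for each i, let V_i = {v_{i,1},…,v_{i,α}} be a clique; for each edge v_iv_j of G, add a complete bipartite graph between V_i and V_j; for each i,j add a pendant vertex u_{i,j} adjacent to v_{i,j}; add vertices w₁,…,w_α, with w_j adjacent to u_{1,j},…,u_{n,j}. Then G_α is 1-tough. -/

import Mathlib

open SimpleGraph

/-- Number of connected components after deleting vertex set `S`. -/
noncomputable def numComp {V : Type*} (G : SimpleGraph V) (S : Set V) : ℕ :=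
  Nat.card (G.induce (Sᶜ : Set V)).ConnectedComponent

/-- `S` is a cutset: its removal leaves more than one component. -/
def IsCutset {V : Type*} (G : SimpleGraph V) (S : Set V) : Prop :=
  1 < numComp G S

/-- `G` is `t`-tough: every cutset `S` leaves at most `|S|/t` components.
Equivalently `τ(G) ≥ t` (for `t > 0`). -/
def IsTTough {V : Type*} (t : ℚ) (G : SimpleGraph V) : Prop :=
  ∀ S : Set V, IsCutset G S → t * (numComp G S : ℚ) ≤ (Nat.card S : ℚ)

/-- `τ(G) = t`: `G` is `t`-tough and `t` is the largest such value. -/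
def ToughnessEq {V : Type*} (G : SimpleGraph V) (t : ℚ) : Prop :=
  IsTTough t G ∧ ∀ t' : ℚ, IsTTough t' G → t' ≤ t

/-- The toughness of `G` equals `t`, characterized as the minimum of
`|S|/ω(G−S)` over cutsets `S` (valid for connected noncomplete graphs). -/
def ToughnessMin {V : Type*} (G : SimpleGraph V) (t : ℚ) : Prop :=
  IsLeast {q : ℚ | ∃ S : Set V, IsCutset G S ∧
    q = (Nat.card S : ℚ) / (numComp G S : ℚ)} t

/-- `G` is minimally `t`-tough. -/
def MinTough {V : Type*} (t : ℚ) (G : SimpleGraph V) : Prop :=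
  ToughnessEq G t ∧ ∀ e ∈ G.edgeSet, ¬ IsTTough t (G.deleteEdges {e})

/-- `G` is almost minimally 1-tough: `τ(G) ≥ 1` and `τ(G−e) < 1` for all edges. -/
def AlmostMinOneTough {V : Type*} (G : SimpleGraph V) : Prop :=
  IsTTough 1 G ∧ ∀ e ∈ G.edgeSet, ¬ IsTTough 1 (G.deleteEdges {e})

/-- The independence number of `G`. -/
noncomputable def indepNum {V : Type*} [Fintype V] (G : SimpleGraph V) : ℕ :=
  sSup {n | ∃ s : Set V, s.Pairwise (fun x y => ¬ G.Adj x y) ∧ Nat.card s = n}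

/-- `G` is α-critical: deleting any edge increases the independence number. -/
def AlphaCritical {V : Type*} [Fintype V] (G : SimpleGraph V) : Prop :=
  ∀ e ∈ G.edgeSet, _root_.indepNum G < _root_.indepNum (G.deleteEdges {e})

/-- The construction `G_α`: each vertex `i` of `G` is replaced by a clique
`V_i = {i} × Fin α`; edges of `G` become complete bipartite graphs between the
corresponding cliques; each `v_{i,j}` gets a pendant neighbor `u_{i,j}`; and
each hub vertex `w_j` is adjacent to all `u_{i,j}`. -/
def Galpha {V : Type*} (G : SimpleGraph V) (α : ℕ) :
    SimpleGraph ((V × Fin α) ⊕ ((V × Fin α) ⊕ Fin α)) :=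
  SimpleGraph.fromRel (fun x y =>
    match x, y with
    | Sum.inl p, Sum.inl q => p.1 = q.1 ∨ G.Adj p.1 q.1
    | Sum.inl p, Sum.inr (Sum.inl q) => p = q
    | Sum.inr (Sum.inl p), Sum.inr (Sum.inr j) => p.2 = j
    | _, _ => False)

/-!
Call a component of `G_α - S` a core component if it contains a clique vertex `v i j`. Any
other component either contains a hub `w j`, and then every row `i` meets `S` in `u i j` or
`v i j`, or is an isolated pendant `u i j` with `v i j, w j ∈ S`. Fix two rows `i₀ ≠ i₁`.
Charging a hub component to the vertex of `S` in row `i₁` and column `j`, and a pendant `u i j`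
to `v i j` (to `w j` if `i = i₀`), maps the non-core components injectively into `S \ row i₀`.
So it suffices to choose `i₀` with at least as many vertices of `S` in row `i₀` as there are
core components. If a whole clique `V_{i₀}` lies in `S`, distinct core components meet
nonadjacent rows, so there are at most `α(G) ≤ α` of them. Otherwise, as `G` is connected, there
is only one core component; since `S` is a cutset there is also a non-core one, which forces
`S` to meet some row.
-/

namespace SimpleGraph.ConnectedComponent

variable {W : Type*} {H : SimpleGraph W} {s : Set W}

def verts (c : (H.induce s).ConnectedComponent) : Set W := Subtype.val '' c.supp

lemma mem_verts_connectedComponentMk {x : W} (hx : x ∈ s) :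
    x ∈ ((H.induce s).connectedComponentMk ⟨x, hx⟩).verts :=
  ⟨⟨x, hx⟩, rfl, rfl⟩

lemma mem_of_mem_verts {c : (H.induce s).ConnectedComponent} {x : W} (hx : x ∈ c.verts) :
    x ∈ s := by
  obtain ⟨y, -, rfl⟩ := hx
  exact y.2

lemma eq_of_mem_verts {c c' : (H.induce s).ConnectedComponent} {x : W} (hx : x ∈ c.verts)
    (hx' : x ∈ c'.verts) : c = c' := by
  obtain ⟨y, hy, rfl⟩ := hx
  obtain ⟨y', hy', hyy'⟩ := hx'
  rw [← (mem_supp_iff _ _).mp hy, ← (mem_supp_iff _ _).mp hy', Subtype.ext hyy']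

lemma mem_verts_of_adj {c : (H.induce s).ConnectedComponent} {x y : W} (hx : x ∈ c.verts)
    (hy : y ∈ s) (hxy : H.Adj x y) : y ∈ c.verts := by
  obtain ⟨x', hx', rfl⟩ := hx
  exact ⟨⟨y, hy⟩, (c.mem_supp_congr_adj (by simpa using hxy)).mp hx', rfl⟩

lemma exists_mem_verts (c : (H.induce s).ConnectedComponent) : ∃ x, x ∈ c.verts :=
  c.nonempty_supp.image _

/-- Since components are disjoint, each `ρ x` lies in at most one of them. -/
lemma ncard_le_ncard_of_forall_exists_mem_verts [Finite W]
    {C : Set (H.induce s).ConnectedComponent} {T : Set W} (ρ : W → W)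
    (h : ∀ c ∈ C, ∃ x ∈ T, ρ x ∈ c.verts) : C.ncard ≤ T.ncard := by
  classical
  rw [Set.ncard_eq_toFinset_card C, Set.ncard_eq_toFinset_card T]
  refine Finset.card_le_card_of_forall_subsingleton (fun c x => ρ x ∈ c.verts) ?_ ?_
  · simpa using h
  · exact fun x _ c hc c' hc' => eq_of_mem_verts hc.2 hc'.2

end SimpleGraph.ConnectedComponent

lemma Set.ncard_le_indepNum {V : Type*} [Fintype V] {G : SimpleGraph V} {s : Set V}
    (hs : s.Pairwise (fun x y => ¬ G.Adj x y)) : s.ncard ≤ _root_.indepNum G := by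
  refine le_csSup ⟨Nat.card V, ?_⟩ ⟨s, hs, rfl⟩
  rintro n ⟨t, -, rfl⟩
  exact t.ncard_le_card

namespace Galpha

open ConnectedComponent

variable {V : Type*} {G : SimpleGraph V} {α : ℕ}

abbrev v (i : V) (j : Fin α) : (V × Fin α) ⊕ ((V × Fin α) ⊕ Fin α) := Sum.inl (i, j)

abbrev u (i : V) (j : Fin α) : (V × Fin α) ⊕ ((V × Fin α) ⊕ Fin α) :=
  Sum.inr (Sum.inl (i, j))

abbrev w (j : Fin α) : (V × Fin α) ⊕ ((V × Fin α) ⊕ Fin α) := Sum.inr (Sum.inr j)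

def row (i : V) : Set ((V × Fin α) ⊕ ((V × Fin α) ⊕ Fin α)) :=
  Set.range (v i) ∪ Set.range (u i)

variable {S : Set ((V × Fin α) ⊕ ((V × Fin α) ⊕ Fin α))}

lemma adj_v_v {i i' : V} {j j' : Fin α} (h : i = i' ∨ G.Adj i i') (hne : (i, j) ≠ (i', j')) :
    (Galpha G α).Adj (v i j) (v i' j') := by
  simp only [Galpha, fromRel_adj]
  exact ⟨by simpa using hne, Or.inl h⟩

lemma adj_v_u (i : V) (j : Fin α) : (Galpha G α).Adj (v i j) (u i j) := by
  simp [Galpha]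

lemma adj_u_w (i : V) (j : Fin α) : (Galpha G α).Adj (u i j) (w j) := by
  simp [Galpha]

variable (G α S) in
def coreComps : Set ((Galpha G α).induce Sᶜ).ConnectedComponent :=
  {c | ∃ i j, v i j ∈ c.verts}

lemma eq_of_v_mem_verts {c c' : ((Galpha G α).induce Sᶜ).ConnectedComponent} {i i' : V}
    {j j' : Fin α} (h : v i j ∈ c.verts) (h' : v i' j' ∈ c'.verts)
    (hii' : i = i' ∨ G.Adj i i') : c = c' := by
  by_cases heq : (i, j) = (i', j')
  · simp only [Prod.mk.injEq] at heq
    obtain ⟨rfl, rfl⟩ := heq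
    exact eq_of_mem_verts h h'
  · exact eq_of_mem_verts (mem_verts_of_adj h (mem_of_mem_verts h') (adj_v_v hii' heq)) h'

lemma ncard_coreComps_le_indepNum [Fintype V] : (coreComps G α S).ncard ≤ _root_.indepNum G := by
  choose r _ hr using fun c : coreComps G α S => c.2
  have hsame : ∀ c c', (r c = r c' ∨ G.Adj (r c) (r c')) → c = c' := fun c c' h =>
    Subtype.ext (eq_of_v_mem_verts (hr c) (hr c') h)
  have hinj : Function.Injective r := fun c c' h => hsame c c' (Or.inl h)
  calc (coreComps G α S).ncard = (Set.range r).ncard := by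
        rw [Set.ncard_range_of_injective hinj, Nat.card_coe_set_eq]
    _ ≤ _root_.indepNum G := by
        refine Set.ncard_le_indepNum ?_
        rintro _ ⟨c, rfl⟩ _ ⟨c', rfl⟩ hne hadj
        exact hne (congrArg r (hsame c c' (Or.inr hadj)))

lemma ncard_coreComps_le_one [Finite V] (hconn : G.Connected) (hS : ∀ i, ∃ j, v i j ∉ S) :
    (coreComps G α S).ncard ≤ 1 := by
  refine (Set.ncard_le_one).mpr ?_
  rintro c ⟨i, j, hc⟩ c' ⟨i', j', hc'⟩
  obtain ⟨p⟩ := hconn.preconnected i i'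
  induction p generalizing j c with
  | nil => exact eq_of_v_mem_verts hc hc' (Or.inl rfl)
  | @cons a b _ hab _ ih =>
    obtain ⟨jb, hjb⟩ := hS b
    exact (eq_of_v_mem_verts hc (mem_verts_connectedComponentMk hjb) (Or.inr hab)).trans
      (ih _ _ (mem_verts_connectedComponentMk hjb) hc')

lemma hub_or_pendant_of_not_mem_coreComps {c : ((Galpha G α).induce Sᶜ).ConnectedComponent}
    (hc : c ∉ coreComps G α S) :
    (∃ j, w j ∈ c.verts ∧ ∀ i, u i j ∈ S ∨ v i j ∈ S) ∨
      ∃ i j, u i j ∈ c.verts ∧ v i j ∈ S ∧ w j ∈ S := by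
  have hv : ∀ {i j}, u i j ∈ c.verts → v i j ∈ S := fun hu => by
    by_contra hv
    exact hc ⟨_, _, mem_verts_of_adj hu hv (adj_v_u _ _).symm⟩
  have hub : ∀ {j}, w j ∈ c.verts → ∀ i, u i j ∈ S ∨ v i j ∈ S := fun hw i => by
    by_contra! h
    exact h.2 (hv (mem_verts_of_adj hw h.1 (adj_u_w i _).symm))
  obtain ⟨x, hx⟩ := c.exists_mem_verts
  rcases x with ⟨i, j⟩ | ⟨i, j⟩ | j
  · exact absurd ⟨i, j, hx⟩ hc
  · by_cases hw : w j ∈ S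
    · exact Or.inr ⟨i, j, hx, hv hx, hw⟩
    · have hw' := mem_verts_of_adj hx hw (adj_u_w i j)
      exact Or.inl ⟨j, hw', hub hw'⟩
  · exact Or.inl ⟨j, hx, hub hx⟩

open Classical in
variable (S) in
/-- `owner S i₀ x` is a vertex of the component charged to `x`, so the charging is injective. -/
noncomputable def owner (i₀ : V) :
    (V × Fin α) ⊕ ((V × Fin α) ⊕ Fin α) → (V × Fin α) ⊕ ((V × Fin α) ⊕ Fin α)
  | Sum.inl (i, j) => if w j ∈ S then u i j else w j
  | Sum.inr (Sum.inl (_, j)) => w j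
  | Sum.inr (Sum.inr j) => u i₀ j

lemma ncard_compl_coreComps_le [Finite V] {i₀ i₁ : V} (hne : i₁ ≠ i₀) :
    (coreComps G α S)ᶜ.ncard ≤ (S \ row i₀).ncard := by
  refine ncard_le_ncard_of_forall_exists_mem_verts (owner S i₀) fun c hc => ?_
  rcases hub_or_pendant_of_not_mem_coreComps hc with ⟨j, hw, hcut⟩ | ⟨i, j, hu, hv, hw⟩
  · have hwS : w j ∉ S := mem_of_mem_verts hw
    by_cases huS : u i₁ j ∈ S
    · exact ⟨u i₁ j, ⟨huS, by simp [row, hne.symm]⟩, hw⟩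
    · refine ⟨v i₁ j, ⟨(hcut i₁).resolve_left huS, by simp [row, hne.symm]⟩, ?_⟩
      simpa [owner, hwS]
  · by_cases hi : i = i₀
    · subst hi
      exact ⟨w j, ⟨hw, by simp [row]⟩, hu⟩
    · exact ⟨v i j, ⟨hv, by simp [row, Ne.symm hi]⟩, by simpa [owner, hw]⟩

lemma numComp_le_of_ncard_coreComps_le [Finite V] {i₀ i₁ : V} (hne : i₁ ≠ i₀)
    (h : (coreComps G α S).ncard ≤ (S ∩ row i₀).ncard) :
    numComp (Galpha G α) S ≤ Nat.card S :=
  calc numComp (Galpha G α) S = (coreComps G α S).ncard + (coreComps G α S)ᶜ.ncard :=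
        (Set.ncard_add_ncard_compl _).symm
    _ ≤ (S ∩ row i₀).ncard + (S \ row i₀).ncard :=
        add_le_add h (ncard_compl_coreComps_le hne)
    _ = Nat.card S := Set.ncard_inter_add_ncard_sdiff_eq_ncard S _

lemma exists_inter_row_nonempty [Nonempty V] {c : ((Galpha G α).induce Sᶜ).ConnectedComponent}
    (hc : c ∉ coreComps G α S) : ∃ i₀, (S ∩ row i₀).Nonempty := by
  rcases hub_or_pendant_of_not_mem_coreComps hc with ⟨j, -, hcut⟩ | ⟨i, j, -, hv, -⟩
  · obtain ⟨i⟩ := ‹Nonempty V›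
    rcases hcut i with h | h
    exacts [⟨i, u i j, h, by simp [row]⟩, ⟨i, v i j, h, by simp [row]⟩]
  · exact ⟨i, v i j, hv, by simp [row]⟩

lemma exists_row_ncard_coreComps_le [Fintype V] (hconn : G.Connected)
    (hind : _root_.indepNum G ≤ α) (hS : IsCutset (Galpha G α) S) :
    ∃ i₀, (coreComps G α S).ncard ≤ (S ∩ row i₀).ncard := by
  by_cases hrow : ∃ i₀, ∀ j, v i₀ j ∈ S
  · obtain ⟨i₀, hi₀⟩ := hrow
    refine ⟨i₀, ncard_coreComps_le_indepNum.trans (hind.trans ?_)⟩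
    calc α = (Set.range (v (α := α) i₀)).ncard := by
          rw [Set.ncard_range_of_injective (fun _ _ h => by simpa using h), Nat.card_fin]
      _ ≤ (S ∩ row i₀).ncard := Set.ncard_le_ncard <|
          Set.subset_inter (Set.range_subset_iff.mpr hi₀) Set.subset_union_left
  · push Not at hrow
    obtain ⟨c, hc⟩ : (coreComps G α S)ᶜ.Nonempty := by
      have := Set.ncard_add_ncard_compl (coreComps G α S)
      have := ncard_coreComps_le_one hconn hrow
      rw [← Set.ncard_pos]
      unfold IsCutset numComp at hS
      omega
    have := hconn.nonempty
    obtain ⟨i₀, hi₀⟩ := exists_inter_row_nonempty hc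
    exact ⟨i₀, (ncard_coreComps_le_one hconn hrow).trans ((Set.ncard_pos).mpr hi₀)⟩

end Galpha

theorem stmt10_general {V : Type*} [Fintype V] (G : SimpleGraph V) (α : ℕ)
    (hconn : G.Connected)
    (hiso : ∀ v : V, ∃ w : V, G.Adj v w)
    (hind : _root_.indepNum G ≤ α) :
    IsTTough 1 (Galpha G α) := by
  intro S hS
  obtain ⟨i₀, hcore⟩ := Galpha.exists_row_ncard_coreComps_le hconn hind hS
  obtain ⟨i₁, hi₁⟩ := hiso i₀
  rw [one_mul]
  exact_mod_cast Galpha.numComp_le_of_ncard_coreComps_le hi₁.ne' hcore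

theorem stmt10 {V : Type*} [Fintype V] (G : SimpleGraph V) (α : ℕ)
    (hα : 0 < α) (hconn : G.Connected)
    (hiso : ∀ v : V, ∃ w : V, G.Adj v w)
    (hind : _root_.indepNum G ≤ α) :
    IsTTough 1 (Galpha G α) :=
  stmt10_general G α hconn hiso hind
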